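/- If I is an admissible commutativity ideal of KQ, then I contains all nonzero squares a² of arrows in KQ, and the orthogonal ideal I⊥ is a square-free anti-commutativity ideal. If I is an admissible anti-commutativity ideal of KQ, then I contains all nonzero squares a² of arrows in KQ, and I⊥ is a square-free commutativity ideal. -/

import Mathlib

/-! Common vocabulary for partly (anti-)commutative quiver algebras. -/

open Quiver

/-- The bundled arrows of a quiver. -/
def QArr (V : Type) [Quiver.{0} V] : Type := Σ a b : V, a ⟶ b

variable {V : Type} [Quiver.{0} V]

/-- Source of a bundled arrow. -/
def QArr.src (e : QArr V) : V := e.1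

/-- Target of a bundled arrow. -/
def QArr.tgt (e : QArr V) : V := e.2.1

/-- A bundled arrow is a loop if its source equals its target. -/
def QArr.IsLoop (e : QArr V) : Prop := e.src = e.tgt

/-- A path in a quiver bundled together with its endpoints. -/
structure QPath (V : Type) [Quiver.{0} V] : Type where
  src : V
  tgt : V
  path : Quiver.Path src tgt

namespace QPath

/-- The length of a bundled path. -/
def length (p : QPath V) : ℕ := p.path.length

/-- Composition of bundled paths, defined when the endpoints match. -/
def comp (p q : QPath V) (h : p.tgt = q.src) : QPath V :=
  ⟨p.src, q.tgt, p.path.comp (q.path.cast h.symm rfl)⟩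

/-- The bundled path of length one corresponding to an arrow. -/
def ofArrow (e : QArr V) : QPath V := ⟨e.1, e.2.1, Quiver.Hom.toPath e.2.2⟩

/-- The trivial path at a vertex. -/
def triv (v : V) : QPath V := ⟨v, v, Quiver.Path.nil⟩

end QPath

/-- The list of bundled arrows of a path, in order. -/
def Quiver.Path.arrList : ∀ {a b : V}, Quiver.Path a b → List (QArr V)
  | _, _, Quiver.Path.nil => []
  | _, _, Quiver.Path.cons p e => p.arrList ++ [⟨_, _, e⟩]

/-- The list of bundled arrows of a bundled path. -/
def QPath.arrows (p : QPath V) : List (QArr V) := p.path.arrList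

/-- A quiver is connected if any two vertices are joined by a sequence of arrows,
disregarding directions. -/
def QuiverConnected (V : Type) [Quiver.{0} V] : Prop :=
  ∀ a b : V, Relation.ReflTransGen (fun x y => Nonempty (x ⟶ y) ∨ Nonempty (y ⟶ x)) a b

/-- A realization of the path algebra `KQ` of a quiver `Q` over `K`: a `K`-algebra `A`
equipped with a `K`-basis indexed by the paths of `Q`, such that multiplication of basis
elements is given by concatenation of paths (and is `0` on non-composable paths), and such
that the identity is the sum of the classes of the trivial paths. -/
structure PathAlgebraSpec (K : Type) [Field K] (V : Type) [Quiver.{0} V]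
    (A : Type) [Ring A] [Algebra K A] : Type where
  basis : Module.Basis (QPath V) K A
  basis_mul : ∀ (p q : QPath V) (h : p.tgt = q.src),
    basis p * basis q = basis (p.comp q h)
  basis_mul_zero : ∀ p q : QPath V, p.tgt ≠ q.src → basis p * basis q = 0
  basis_one : (1 : A) = ∑ᶠ v : V, basis (QPath.triv v)

variable {K A : Type} [Field K] [Ring A] [Algebra K A]

/-- The element of the path algebra corresponding to an arrow. -/
noncomputable def PathAlgebraSpec.arr (S : PathAlgebraSpec K V A) (e : QArr V) : A :=
  S.basis (QPath.ofArrow e)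

/-- A generating set for an (anti-)commutativity ideal: a set `mono` of pairs of arrows
recording the quadratic monomial generators `ab`, and a set `comm` of pairs of arrows
recording the (anti-)commutativity generators `ab ∓ ba`. -/
structure QuadGens (V : Type) [Quiver.{0} V] : Type where
  mono : Set (QArr V × QArr V)
  comm : Set (QArr V × QArr V)

/-- Minimality of a generating set: if `ab ∓ ba` is one of the (anti-)commutativity
generators, then neither `ab` nor `ba` is one of the monomial generators. -/
def QuadGens.Minimal (G : QuadGens V) : Prop :=
  ∀ p ∈ G.comm, (p.1, p.2) ∉ G.mono ∧ (p.2, p.1) ∉ G.mono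

/-- The set of generators of an (anti-)commutativity ideal determined by `G`; for `ε = 1`
the binomial generators are the commutativity relations `ab - ba`, for `ε = -1` they are
the anti-commutativity relations `ab + ba`. -/
def QuadGens.gensSet (G : QuadGens V) (S : PathAlgebraSpec K V A) (ε : K) : Set A :=
  {x | ∃ p ∈ G.mono, x = S.arr p.1 * S.arr p.2} ∪
  {x | ∃ p ∈ G.comm, x = S.arr p.1 * S.arr p.2 - ε • (S.arr p.2 * S.arr p.1)}

/-- The span of all paths of length at least `n`; this is the `n`-th power of the
arrow ideal `J` of the path algebra. -/
def PathAlgebraSpec.geSpan (S : PathAlgebraSpec K V A) (n : ℕ) : Submodule K A :=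
  Submodule.span K (S.basis '' {p | n ≤ p.length})

/-- The span of all paths of length exactly `n`: the degree-`n` homogeneous component
of the path algebra. -/
def PathAlgebraSpec.degSpan (S : PathAlgebraSpec K V A) (n : ℕ) : Submodule K A :=
  Submodule.span K (S.basis '' {p | p.length = n})

/-- An ideal `I` of the path algebra is admissible if `Jⁿ ⊆ I ⊆ J²` for some `n ≥ 2`,
where `J` is the arrow ideal. -/
def PathAlgebraSpec.IsAdmissible (S : PathAlgebraSpec K V A) (I : TwoSidedIdeal A) : Prop :=
  ∃ n : ℕ, 2 ≤ n ∧ (S.geSpan n : Set A) ⊆ (I : Set A) ∧ (I : Set A) ⊆ (S.geSpan 2 : Set A)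

/-- An ideal is square-free if it contains no nonzero square `a²` of an arrow, i.e. no
square of a loop. -/
def PathAlgebraSpec.IsSquareFree (S : PathAlgebraSpec K V A) (I : TwoSidedIdeal A) : Prop :=
  ∀ e : QArr V, e.IsLoop → S.arr e * S.arr e ∉ I

/-- The generating set of the orthogonal ideal `I⊥`: the relations `ab ± ba` obtained by
flipping the sign of the (anti-)commutativity generators of `I`, together with all quadratic
monomials `cd` with `cd ≠ 0` and `cd ≠ dc` in `KQ/I`. -/
def QuadGens.perpGens (G : QuadGens V) (S : PathAlgebraSpec K V A) (ε : K)
    (I : TwoSidedIdeal A) : Set A :=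
  {x | ∃ p ∈ G.comm, x = S.arr p.1 * S.arr p.2 + ε • (S.arr p.2 * S.arr p.1)} ∪
  {x | ∃ c d : QArr V, S.arr c * S.arr d ∉ I ∧ S.arr c * S.arr d - S.arr d * S.arr c ∉ I ∧
    x = S.arr c * S.arr d}

/-- The orthogonal ideal `I⊥` of an (anti-)commutativity ideal. -/
def QuadGens.perpIdeal (G : QuadGens V) (S : PathAlgebraSpec K V A) (ε : K)
    (I : TwoSidedIdeal A) : TwoSidedIdeal A :=
  TwoSidedIdeal.span (G.perpGens S ε I)

/-- The directed-edge relation of the generator graph `Γ_{I⊥}` of the orthogonal ideal: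
there is a directed edge `c → d` for each quadratic monomial generator `cd` of `I⊥`,
i.e. whenever `cd ≠ 0` and `cd ≠ dc` in `KQ/I`. -/
def QuadGens.perpDirEdge (S : PathAlgebraSpec K V A) (I : TwoSidedIdeal A)
    (c d : QArr V) : Prop :=
  S.arr c * S.arr d ∉ I ∧ S.arr c * S.arr d - S.arr d * S.arr c ∉ I

/-- A directed graph (given by its edge relation) contains a directed cycle. -/
def HasDirectedCycle {α : Type} (E : α → α → Prop) : Prop :=
  ∃ a : α, Relation.TransGen E a a

/- The quotient algebra `KQ/I`. -/

/-- The `K`-algebra structure on the quotient of a `K`-algebra by a ring congruence. -/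
noncomputable instance RingCon.quotientAlgebra' (c : RingCon A) : Algebra K c.Quotient where
  algebraMap :=
    { toFun k := ((algebraMap K A k : A) : c.Quotient)
      map_one' := by
        show ((algebraMap K A 1 : A) : c.Quotient) = 1
        rw [map_one, c.coe_one]
      map_mul' x y := by
        show ((algebraMap K A (x * y) : A) : c.Quotient) =
          ((algebraMap K A x : A) : c.Quotient) * ((algebraMap K A y : A) : c.Quotient)
        rw [map_mul, c.coe_mul]
      map_zero' := by
        show ((algebraMap K A 0 : A) : c.Quotient) = 0
        rw [map_zero, c.coe_zero]
      map_add' x y := by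
        show ((algebraMap K A (x + y) : A) : c.Quotient) =
          ((algebraMap K A x : A) : c.Quotient) + ((algebraMap K A y : A) : c.Quotient)
        rw [map_add, c.coe_add] }
  commutes' k x := by
    induction x using Quotient.inductionOn' with
    | h r =>
      show ((algebraMap K A k : A) : c.Quotient) * (r : c.Quotient) =
        (r : c.Quotient) * ((algebraMap K A k : A) : c.Quotient)
      rw [← c.coe_mul, ← c.coe_mul, Algebra.commutes]
  smul_def' k x := by
    induction x using Quotient.inductionOn' with
    | h r =>
      show ((k • r : A) : c.Quotient) =
        ((algebraMap K A k : A) : c.Quotient) * (r : c.Quotient)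
      rw [← c.coe_mul, Algebra.smul_def]

/-- The quotient algebra `A/I` of the path algebra by a two-sided ideal. -/
abbrev TwoSidedIdeal.Qt (I : TwoSidedIdeal A) : Type _ := I.ringCon.Quotient

/-- The quotient map `A → A/I` as a `K`-algebra homomorphism. -/
noncomputable def TwoSidedIdeal.πAlg (K : Type) [Field K] {A : Type} [Ring A] [Algebra K A]
    (I : TwoSidedIdeal A) : A →ₐ[K] I.Qt :=
  { I.ringCon.mk' with commutes' := fun _ => rfl }

/-- The degree-`n` homogeneous component of the quotient algebra `KQ/I`: the image of the
span of the paths of length `n`. -/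
noncomputable def PathAlgebraSpec.degQuot (S : PathAlgebraSpec K V A) (I : TwoSidedIdeal A)
    (n : ℕ) : Submodule K I.Qt :=
  Submodule.map (TwoSidedIdeal.πAlg K I).toLinearMap (S.degSpan n)

/-- The positively graded part `Z⁺(KQ/I) = ⊕_{i ≥ 1} Zⁱ(KQ/I)` of the center of `KQ/I`. -/
noncomputable def PathAlgebraSpec.ZPlus (S : PathAlgebraSpec K V A) (I : TwoSidedIdeal A) :
    Submodule K I.Qt :=
  ⨆ i : ℕ, (Subalgebra.toSubmodule (Subalgebra.center K I.Qt) ⊓ S.degQuot I (i + 1))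

/-- The even part `Z^ev(KQ/I) = ⊕_{k ≥ 0} Z^{2k}(KQ/I)` of the center of `KQ/I`. -/
noncomputable def PathAlgebraSpec.ZEv (S : PathAlgebraSpec K V A) (I : TwoSidedIdeal A) :
    Submodule K I.Qt :=
  ⨆ k : ℕ, (Subalgebra.toSubmodule (Subalgebra.center K I.Qt) ⊓ S.degQuot I (2 * k))

/-- A subset of an algebra (e.g. the carrier of a graded part of the center) is finitely
generated as a `K`-algebra if it coincides with the subalgebra generated by a finite subset
of itself. -/
def FinGenAsAlgebra (K : Type) [Field K] {B : Type} [Ring B] [Algebra K B]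
    (M : Set B) : Prop :=
  ∃ s : Finset B, ↑s ⊆ M ∧ M = (Algebra.adjoin K (↑s : Set B) : Set B)

/-- The subquiver `Q_x` of `Q`: its vertices are `x` together with all endpoints of arrows
incident to `x`, and its arrows are the arrows of `Q` with origin or target `x`. -/
def Nbhd (x : V) : Type :=
  {v : V // v = x ∨ ∃ e : QArr V, (e.src = x ∨ e.tgt = x) ∧ (e.src = v ∨ e.tgt = v)}

instance (x : V) : Quiver.{0} (Nbhd x) :=
  ⟨fun a b => {e : a.val ⟶ b.val // a.val = x ∨ b.val = x}⟩

/-- The inclusion of the arrows of `Q_x` into the arrows of `Q`. -/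
def Nbhd.arrToV {x : V} (E : QArr (Nbhd x)) : QArr V := ⟨E.1.val, E.2.1.val, E.2.2.val⟩

/-- The generating set of the ideal `I_x` of `KQ_x`: those generating relations of `I` all
of whose arrows lie in `Q_x`. -/
def QuadGens.restrict (G : QuadGens V) (x : V) : QuadGens (Nbhd x) where
  mono := {p | (Nbhd.arrToV p.1, Nbhd.arrToV p.2) ∈ G.mono}
  comm := {p | (Nbhd.arrToV p.1, Nbhd.arrToV p.2) ∈ G.comm}

/-- One swap of two adjacent letters (related by `R`) in a word of arrows. -/
inductive SwapStep (R : QArr V → QArr V → Prop) : List (QArr V) → List (QArr V) → Prop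
  | swap (u w : List (QArr V)) {a b : QArr V} (h : R a b) :
      SwapStep R (u ++ a :: b :: w) (u ++ b :: a :: w)

/-- `NSwap R n l m` means the word `m` is obtained from the word `l` by exactly `n`
swaps of adjacent letters related by `R`. -/
inductive NSwap (R : QArr V → QArr V → Prop) : ℕ → List (QArr V) → List (QArr V) → Prop
  | refl (l : List (QArr V)) : NSwap R 0 l l
  | step {n : ℕ} {l m k : List (QArr V)} :
      SwapStep R l k → NSwap R n k m → NSwap R (n + 1) l m

/-- The transposition `(ab)` is allowed if `ab ∉ I` and `ab ∓ ba` is one of the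
(anti-)commutativity generators. -/
def AllowedTransposition (S : PathAlgebraSpec K V A) (G : QuadGens V) (I : TwoSidedIdeal A)
    (a b : QArr V) : Prop :=
  S.arr a * S.arr b ∉ I ∧ ((a, b) ∈ G.comm ∨ (b, a) ∈ G.comm)

/-- Two paths are equivalent by exactly `n` allowed transpositions. -/
def PathEquivN (S : PathAlgebraSpec K V A) (G : QuadGens V) (I : TwoSidedIdeal A)
    (n : ℕ) (p q : QPath V) : Prop :=
  p.src = q.src ∧ p.tgt = q.tgt ∧
    NSwap (AllowedTransposition S G I) n p.arrows q.arrows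

/-- Two paths are equivalent, `p ∼ q`, if one is obtained from the other by a sequence of
allowed transpositions. -/
def PathEquiv (S : PathAlgebraSpec K V A) (G : QuadGens V) (I : TwoSidedIdeal A)
    (p q : QPath V) : Prop :=
  ∃ n : ℕ, PathEquivN S G I n p q

/-- The undirected-edge relation of the generator/relation graph: `a — b` whenever
`ab ∓ ba` is one of the (anti-)commutativity generators. -/
def UndirEdge (G : QuadGens V) (a b : QArr V) : Prop :=
  (a, b) ∈ G.comm ∨ (b, a) ∈ G.comm

/-- The directed-edge relation of the relation graph `Γ_rel`: `a → b` whenever `ab = 0`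
in `KQ/I`. -/
def RelDirEdge (S : PathAlgebraSpec K V A) (I : TwoSidedIdeal A) (a b : QArr V) : Prop :=
  S.arr a * S.arr b ∈ I

/-- A clique in the relation graph: a set of vertices pairwise joined by undirected edges. -/
def GraphClique (G : QuadGens V) (s : Set (QArr V)) : Prop :=
  ∀ a ∈ s, ∀ b ∈ s, a ≠ b → UndirEdge G a b

/-- The condition of Theorem `rel-graph`(i) on a set of vertices of the relation graph:
it is a clique of loops, and every other vertex `b` either has a directed edge from the
clique to `b` and one from `b` to the clique, or can be adjoined to the clique. -/
def CliqueCond (S : PathAlgebraSpec K V A) (G : QuadGens V) (I : TwoSidedIdeal A)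
    (s : Set (QArr V)) : Prop :=
  (∀ a ∈ s, a.IsLoop) ∧ GraphClique G s ∧
    ∀ b : QArr V, b ∉ s →
      ((∃ a ∈ s, RelDirEdge S I a b) ∧ (∃ a ∈ s, RelDirEdge S I b a)) ∨
        GraphClique G (insert b s)

open scoped Classical in
/-- The number of occurrences of an arrow in a list of arrows. -/
noncomputable def acount (l : List (QArr V)) (a : QArr V) : ℕ := l.count a


/-! For a set `L` of words in the arrows that is an ideal of the free monoid, the paths with
word in `L` span an ideal of `KQ`. Let `e` be a loop. If neither the monomial `e²` nor the
anti-commutativity relation `e² + e²` is a generator of `I`, then every generator lies in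
the span of the paths that are not powers of `e`, hence so does `I ⊇ Jⁿ ∋ eⁿ`, which is
absurd. So `e² ∈ I`. Likewise every generator of `I⊥` lies in the span of the paths of
length `≥ 2` other than `e²`: the monomial `e²` is not a generator since `e² ∈ I`, and a
relation `e² ± e²` of `I⊥` comes from the relation `e² + e²` of `I`, so it is `e² - e² = 0`. -/

namespace Quiver.Path

lemma arrList_cast {a a' b : V} (h : a = a') (p : Path a b) :
    (p.cast h rfl).arrList = p.arrList := by
  subst h; rw [Path.cast_rfl_rfl]

lemma arrList_comp {a b c : V} (p : Path a b) (q : Path b c) :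
    (p.comp q).arrList = p.arrList ++ q.arrList := by
  induction q with
  | nil => simp [arrList]
  | cons q e ih => simp [arrList, ih]

lemma length_arrList {a b : V} (p : Path a b) : p.arrList.length = p.length := by
  induction p with
  | nil => simp [arrList]
  | cons p e ih => simp [arrList, ih]; rfl

end Quiver.Path

namespace QPath

lemma length_arrows (p : QPath V) : p.arrows.length = p.length :=
  p.path.length_arrList

lemma arrows_comp (p q : QPath V) (h : p.tgt = q.src) :
    (p.comp q h).arrows = p.arrows ++ q.arrows := by
  simp [comp, arrows, Path.arrList_comp, Path.arrList_cast]

lemma arrows_ofArrow (e : QArr V) : (ofArrow e).arrows = [e] := by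
  simp [ofArrow, arrows, Hom.toPath, Path.arrList]; rfl

lemma arrows_ofArrow_comp_ofArrow (c d : QArr V) (h : c.tgt = d.src) :
    ((ofArrow c).comp (ofArrow d) h).arrows = [c, d] := by
  have := arrows_comp (ofArrow c) (ofArrow d) h
  rwa [arrows_ofArrow, arrows_ofArrow] at this

end QPath

lemma QArr.IsLoop.exists_arrows_eq_replicate {e : QArr V} (he : e.IsLoop) (n : ℕ) :
    ∃ p : QPath V, p.arrows = List.replicate n e := by
  obtain ⟨v, w, f⟩ := e
  obtain rfl : v = w := he
  suffices ∃ p : Path v v, p.arrList = List.replicate n ⟨v, v, f⟩ from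
    let ⟨p, hp⟩ := this; ⟨⟨v, v, p⟩, hp⟩
  induction n with
  | zero => exact ⟨Path.nil, by simp [Path.arrList]⟩
  | succ n ih =>
    obtain ⟨p, hp⟩ := ih
    exact ⟨p.cons f, by rw [Path.arrList, hp]; exact List.replicate_succ'.symm⟩

/-- `L` is an ideal of the free monoid on `α`. -/
def IsWordIdeal {α : Type*} (L : Set (List α)) : Prop :=
  ∀ l ∈ L, ∀ u w, u ++ l ++ w ∈ L

namespace PathAlgebraSpec

variable (S : PathAlgebraSpec K V A)

lemma arr_mul_arr (c d : QArr V) (h : c.tgt = d.src) :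
    S.arr c * S.arr d = S.basis ((QPath.ofArrow c).comp (QPath.ofArrow d) h) :=
  S.basis_mul _ _ h

def wordSpan (L : Set (List (QArr V))) : Submodule K A :=
  Submodule.span K (S.basis '' {p | p.arrows ∈ L})

variable {L : Set (List (QArr V))}

lemma basis_mem_wordSpan_iff (p : QPath V) : S.basis p ∈ S.wordSpan L ↔ p.arrows ∈ L :=
  S.basis.self_mem_span_image

lemma arr_mul_arr_mem_wordSpan {c d : QArr V} (h : [c, d] ∈ L) :
    S.arr c * S.arr d ∈ S.wordSpan L := by
  by_cases hcd : c.tgt = d.src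
  · rw [S.arr_mul_arr c d hcd, basis_mem_wordSpan_iff, QPath.arrows_ofArrow_comp_ofArrow]
    exact h
  · rw [arr, arr, S.basis_mul_zero _ _ hcd]
    exact zero_mem _

lemma basis_mul_basis_mem_wordSpan (hL : IsWordIdeal L) {p q : QPath V}
    (h : p.arrows ∈ L ∨ q.arrows ∈ L) :
    S.basis p * S.basis q ∈ S.wordSpan L := by
  by_cases hpq : p.tgt = q.src
  · rw [S.basis_mul p q hpq, basis_mem_wordSpan_iff, QPath.arrows_comp]
    rcases h with h | h
    · simpa using hL _ h [] q.arrows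
    · simpa using hL _ h p.arrows []
  · rw [S.basis_mul_zero p q hpq]
    exact zero_mem _

lemma mul_mem_wordSpan (hL : IsWordIdeal L) {x y : A}
    (h : x ∈ S.wordSpan L ∨ y ∈ S.wordSpan L) :
    x * y ∈ S.wordSpan L := by
  have mem_span_basis (z : A) : z ∈ Submodule.span K (Set.range S.basis) :=
    S.basis.span_eq ▸ Submodule.mem_top
  rcases h with hx | hy
  · have hxy := Submodule.mul_mem_mul hx (mem_span_basis y)
    rw [wordSpan, Submodule.span_mul_span] at hxy
    refine Submodule.span_le.2 ?_ hxy
    rintro _ ⟨_, ⟨p, hp, rfl⟩, _, ⟨q, rfl⟩, rfl⟩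
    exact S.basis_mul_basis_mem_wordSpan hL (Or.inl hp)
  · have hxy := Submodule.mul_mem_mul (mem_span_basis x) hy
    rw [wordSpan, Submodule.span_mul_span] at hxy
    refine Submodule.span_le.2 ?_ hxy
    rintro _ ⟨_, ⟨p, rfl⟩, _, ⟨q, hq, rfl⟩, rfl⟩
    exact S.basis_mul_basis_mem_wordSpan hL (Or.inr hq)

def wordIdeal (hL : IsWordIdeal L) : TwoSidedIdeal A :=
  TwoSidedIdeal.mk' (S.wordSpan L) (zero_mem _) add_mem neg_mem
    (fun hy => S.mul_mem_wordSpan hL (Or.inr hy)) (fun hx => S.mul_mem_wordSpan hL (Or.inl hx))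

lemma mem_wordIdeal (hL : IsWordIdeal L) {x : A} :
    x ∈ S.wordIdeal hL ↔ x ∈ S.wordSpan L :=
  TwoSidedIdeal.mem_mk' ..

lemma span_le_wordIdeal (hL : IsWordIdeal L) {T : Set A}
    (hT : T ⊆ S.wordSpan L) : TwoSidedIdeal.span T ≤ S.wordIdeal hL :=
  TwoSidedIdeal.span_le.2 fun _ hx => (S.mem_wordIdeal hL).2 (hT hx)

variable {S} in
lemma IsAdmissible.arrows_mem_of_le_wordIdeal (hL : IsWordIdeal L)
    {I : TwoSidedIdeal A} (hadm : S.IsAdmissible I) (hle : I ≤ S.wordIdeal hL) :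
    ∃ n, ∀ p : QPath V, n ≤ p.length → p.arrows ∈ L := by
  obtain ⟨n, -, hJn, -⟩ := hadm
  refine ⟨n, fun p hp => (S.basis_mem_wordSpan_iff p).1 ((S.mem_wordIdeal hL).1 ?_)⟩
  exact hle (hJn (Submodule.subset_span ⟨p, hp, rfl⟩))

end PathAlgebraSpec

namespace QuadGens

variable {S : PathAlgebraSpec K V A} {G : QuadGens V} {ε : K} {I : TwoSidedIdeal A}

theorem sq_mem_gens_of_isAdmissible (hI : I = TwoSidedIdeal.span (G.gensSet S ε))
    (hadm : S.IsAdmissible I) {e : QArr V} (he : e.IsLoop) :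
    (e, e) ∈ G.mono ∨ ((e, e) ∈ G.comm ∧ ε ≠ 1) := by
  by_contra! h
  let L : Set (List (QArr V)) := {l | ∃ x ∈ l, x ≠ e}
  have hL : IsWordIdeal L := fun l ⟨x, hx, hxe⟩ u w =>
    ⟨x, by simp [hx], hxe⟩
  have harr {c d : QArr V} (hcd : ¬(c = e ∧ d = e)) : S.arr c * S.arr d ∈ S.wordSpan L := by
    refine S.arr_mul_arr_mem_wordSpan ?_
    by_cases hc : c = e
    · exact ⟨d, by simp, fun hd => hcd ⟨hc, hd⟩⟩
    · exact ⟨c, by simp, hc⟩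
  have hgens : G.gensSet S ε ⊆ S.wordSpan L := by
    rintro _ (⟨⟨c, d⟩, hm, rfl⟩ | ⟨⟨c, d⟩, hc, rfl⟩)
    · exact harr fun ⟨hc, hd⟩ => h.1 (by simp only at hc hd; rwa [hc, hd] at hm)
    · by_cases hcd : c = e ∧ d = e
      · obtain ⟨rfl, rfl⟩ := hcd
        rw [h.2 hc, one_smul, sub_self]
        exact zero_mem _
      · exact sub_mem (harr hcd) (Submodule.smul_mem _ _ (harr fun ⟨hd, hc⟩ => hcd ⟨hc, hd⟩))
  obtain ⟨n, hn⟩ := hadm.arrows_mem_of_le_wordIdeal hL (hI ▸ S.span_le_wordIdeal hL hgens)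
  obtain ⟨p, hp⟩ := he.exists_arrows_eq_replicate n
  obtain ⟨x, hx, hxe⟩ := hn p (by rw [← QPath.length_arrows, hp, List.length_replicate])
  exact hxe (List.eq_of_mem_replicate (hp ▸ hx))

theorem sq_mem_of_isAdmissible (hI : I = TwoSidedIdeal.span (G.gensSet S ε))
    (hadm : S.IsAdmissible I) {e : QArr V} (he : e.IsLoop) : S.arr e * S.arr e ∈ I := by
  rcases sq_mem_gens_of_isAdmissible hI hadm he with hm | ⟨hc, hε⟩
  · rw [hI]
    exact TwoSidedIdeal.subset_span (Or.inl ⟨(e, e), hm, rfl⟩)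
  · have hgen : (1 - ε) • (S.arr e * S.arr e) ∈ I := by
      rw [sub_smul, one_smul, hI]
      exact TwoSidedIdeal.subset_span (Or.inr ⟨(e, e), hc, rfl⟩)
    have := I.mul_mem_left (algebraMap K A (1 - ε)⁻¹) _ hgen
    rwa [← Algebra.smul_def, inv_smul_smul₀ (sub_ne_zero.2 hε.symm)] at this

variable (G S I) in
def perp : QuadGens V :=
  ⟨{p | perpDirEdge S I p.1 p.2}, G.comm⟩

theorem perpIdeal_eq_span_gensSet_perp :
    G.perpIdeal S ε I = TwoSidedIdeal.span ((G.perp S I).gensSet S (-ε)) := by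
  rw [perpIdeal, perpGens, gensSet, Set.union_comm]
  congr 1
  ext x
  simp only [perp, perpDirEdge, neg_smul, sub_neg_eq_add, Prod.exists, Set.mem_union,
    Set.mem_ofPred_eq, and_assoc]

theorem perpIdeal_isSquareFree (hmin : G.Minimal) (hε : ε = 1 ∨ ε = -1)
    (hI : I = TwoSidedIdeal.span (G.gensSet S ε)) (hadm : S.IsAdmissible I) :
    S.IsSquareFree (G.perpIdeal S ε I) := by
  intro e he hmem
  let L : Set (List (QArr V)) := {l | 2 ≤ l.length ∧ l ≠ [e, e]}
  have hL : IsWordIdeal L := by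
    rintro l ⟨hlen, hne⟩ u w
    refine ⟨by simp only [List.length_append]; omega, fun h => hne ?_⟩
    have hlen' := congrArg List.length h
    simp only [List.length_append, List.length_cons, List.length_nil] at hlen'
    obtain rfl : u = [] := List.eq_nil_of_length_eq_zero (by omega)
    obtain rfl : w = [] := List.eq_nil_of_length_eq_zero (by omega)
    simpa using h
  have harr {c d : QArr V} (hcd : ¬(c = e ∧ d = e)) : S.arr c * S.arr d ∈ S.wordSpan L :=
    S.arr_mul_arr_mem_wordSpan ⟨le_rfl, fun h => hcd (by simpa using h)⟩
  have hgens : G.perpGens S ε I ⊆ S.wordSpan L := by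
    rintro _ (⟨⟨c, d⟩, hc, rfl⟩ | ⟨c, d, hcd, -, rfl⟩)
    · by_cases hce : c = e ∧ d = e
      · obtain ⟨rfl, rfl⟩ := hce
        -- by minimality `e²` is not a monomial generator of `I`, so `e² - ε e²` is one with
        -- `ε ≠ 1`
        have hε' : ε = -1 := hε.resolve_left
          ((sq_mem_gens_of_isAdmissible hI hadm he).resolve_left (hmin _ hc).1).2
        rw [hε', neg_smul, one_smul, add_neg_cancel]
        exact zero_mem _
      · exact add_mem (harr hce) (Submodule.smul_mem _ _ (harr fun ⟨hd, hc⟩ => hce ⟨hc, hd⟩))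
    · exact harr fun ⟨hc, hd⟩ => hcd (by rw [hc, hd]; exact sq_mem_of_isAdmissible hI hadm he)
  have hsq := (S.mem_wordIdeal hL).1 (S.span_le_wordIdeal hL hgens hmem)
  rw [S.arr_mul_arr e e he.symm, PathAlgebraSpec.basis_mem_wordSpan_iff,
    QPath.arrows_ofArrow_comp_ofArrow] at hsq
  exact hsq.2 rfl

end QuadGens

theorem stmt_18_general {V : Type} [Quiver.{0} V]
    {K : Type} [Field K]
    {A : Type} [Ring A] [Algebra K A]
    (S : PathAlgebraSpec K V A)
    (G : QuadGens V) (hmin : G.Minimal)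
    (eps : K) (heps : eps = 1 ∨ eps = -1)
    (I : TwoSidedIdeal A) (hI : I = TwoSidedIdeal.span (G.gensSet S eps))
    (hadm : S.IsAdmissible I) :
    (∀ e : QArr V, e.IsLoop → S.arr e * S.arr e ∈ I) ∧
    (∃ G' : QuadGens V, G.perpIdeal S eps I = TwoSidedIdeal.span (G'.gensSet S (-eps))) ∧
    S.IsSquareFree (G.perpIdeal S eps I) :=
  ⟨fun _ he => QuadGens.sq_mem_of_isAdmissible hI hadm he,
    ⟨G.perp S I, QuadGens.perpIdeal_eq_span_gensSet_perp⟩,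
    QuadGens.perpIdeal_isSquareFree hmin heps hI hadm⟩

/-- If `I` is an admissible commutativity (resp. anti-commutativity)
ideal, then `I` contains all nonzero squares of arrows, and the orthogonal ideal `I⊥` is a
square-free anti-commutativity (resp. commutativity) ideal. -/
theorem stmt_18 {V : Type} [Quiver.{0} V] [Finite V] [Finite (QArr V)]
    {K : Type} [Field K] [IsAlgClosed K]
    {A : Type} [Ring A] [Algebra K A]
    (hconn : QuiverConnected V)
    (S : PathAlgebraSpec K V A)
    (G : QuadGens V) (hmin : G.Minimal)
    (eps : K) (heps : eps = 1 ∨ eps = -1)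
    (I : TwoSidedIdeal A) (hI : I = TwoSidedIdeal.span (G.gensSet S eps))
    (hadm : S.IsAdmissible I) :
    (∀ e : QArr V, e.IsLoop → S.arr e * S.arr e ∈ I) ∧
    (∃ G' : QuadGens V, G.perpIdeal S eps I = TwoSidedIdeal.span (G'.gensSet S (-eps))) ∧
    S.IsSquareFree (G.perpIdeal S eps I) :=
  stmt_18_general S G hmin eps heps I hI hadm
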